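/- arXiv:2603.05979 — 7 statements merged into one kernel-verified Lean document; each statement's English description precedes it below -/
import Mathlib

section
/- Let n ≥ 2 and let L₁ be the set of 2n×2n real block-diagonal matrices (blocks A, D ∈ ℝ^{n×n}) and L₂ the set of block-antidiagonal matrices (blocks B, C ∈ ℝ^{n×n}). Then there are no rank-one connections between invertible elements of L₁ and L₂: if X ∈ L₁ and Y ∈ L₂ are both invertible, then rank(X − Y) ≥ 2. -/
open Matrix

lemma matrix_rank_add_le {m k : Type*} [Fintype m] [Fintype k]
    (A B : Matrix m k ℝ) : (A + B).rank ≤ A.rank + B.rank := by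
  rw [Matrix.rank, Matrix.rank, Matrix.rank, mulVecLin_add]
  calc Module.finrank ℝ ↥(LinearMap.range (A.mulVecLin + B.mulVecLin))
      ≤ Module.finrank ℝ ↥(LinearMap.range A.mulVecLin ⊔ LinearMap.range B.mulVecLin) := by
        apply Submodule.finrank_mono
        rintro x ⟨v, rfl⟩
        exact Submodule.mem_sup.2 ⟨A.mulVecLin v, ⟨v, rfl⟩, B.mulVecLin v, ⟨v, rfl⟩, rfl⟩
    _ ≤ _ := Submodule.finrank_add_le_finrank_add_finrank _ _

/-- For n ≥ 2, there are no rank-one connections between invertible block-diagonal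
and invertible block-antidiagonal 2n×2n matrices: rank(X − Y) ≥ 2. -/
theorem stmt0 (n : ℕ) (hn : 2 ≤ n) (A D B C : Matrix (Fin n) (Fin n) ℝ)
    (hX : IsUnit (Matrix.fromBlocks A 0 0 D))
    (hY : IsUnit (Matrix.fromBlocks 0 B C 0)) :
    2 ≤ (Matrix.fromBlocks A 0 0 D - Matrix.fromBlocks 0 B C 0).rank := by
  set X := Matrix.fromBlocks A 0 0 D with hXdef
  set Y := Matrix.fromBlocks 0 B C 0 with hYdef
  set J : Matrix (Fin n ⊕ Fin n) (Fin n ⊕ Fin n) ℝ :=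
    Matrix.fromBlocks 1 0 0 (-1) with hJdef
  have hJdet : IsUnit J.det := by
    rw [hJdef, Matrix.det_fromBlocks_zero₂₁, Matrix.det_one, one_mul]
    simp [Matrix.det_neg, isUnit_iff_ne_zero]
  have key : J * (X - Y) * J = X + Y := by
    rw [hJdef, hXdef, hYdef]
    simp only [sub_eq_add_neg, Matrix.fromBlocks_neg, Matrix.fromBlocks_add,
      Matrix.fromBlocks_multiply]
    simp
  have hrk : (X + Y).rank = (X - Y).rank := by
    rw [← key, Matrix.rank_mul_eq_left_of_isUnit_det _ _ hJdet,
      Matrix.rank_mul_eq_right_of_isUnit_det _ _ hJdet]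
  have hsum : ((X - Y) + (X + Y)).rank ≤ (X - Y).rank + (X + Y).rank :=
    matrix_rank_add_le _ _
  have h2X : (X - Y) + (X + Y) = ((2 : ℝ) • (1 : Matrix (Fin n ⊕ Fin n) (Fin n ⊕ Fin n) ℝ)) * X := by
    rw [Matrix.smul_mul, Matrix.one_mul]
    module
  have h2Xunit : IsUnit (((2 : ℝ) • (1 : Matrix (Fin n ⊕ Fin n) (Fin n ⊕ Fin n) ℝ)) * X) := by
    refine IsUnit.mul ?_ hX
    rw [Matrix.isUnit_iff_isUnit_det, Matrix.det_smul, Matrix.det_one, mul_one]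
    exact isUnit_iff_ne_zero.2 (by positivity)
  have hcard : ((X - Y) + (X + Y)).rank = 2 * n := by
    rw [h2X, Matrix.rank_of_isUnit _ h2Xunit]
    simp [two_mul]
  rw [hrk, hcard] at hsum
  omega
end

section
/- Let G = (A | B) be an n×2n real matrix with n×n blocks A and B, n ≥ 2. Suppose every 2×2 minor of G taken from rows i₁ < i₂ ≤ n, one column j₁ ≤ n (from A) and one column n < j₂ ≤ 2n (from B) vanishes. Then rank G ≤ 1, or A = 0, or B = 0. -/
/-- If every 2×2 minor of the n×2n matrix G = (A|B) with one column from A and one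
from B vanishes, then rank G ≤ 1, or A = 0, or B = 0 (n ≥ 2). -/
theorem stmt4 (n : ℕ) (hn : 2 ≤ n) (G : Matrix (Fin n) (Fin n ⊕ Fin n) ℝ)
    (hminor : ∀ i₁ i₂ : Fin n, i₁ < i₂ → ∀ j₁ j₂ : Fin n,
      G i₁ (Sum.inl j₁) * G i₂ (Sum.inr j₂) -
        G i₁ (Sum.inr j₂) * G i₂ (Sum.inl j₁) = 0) :
    G.rank ≤ 1 ∨ (∀ i j, G i (Sum.inl j) = 0) ∨ (∀ i j, G i (Sum.inr j) = 0) := by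
  -- the relation holds for all pairs of rows
  have hrel : ∀ i₁ i₂ j₁ j₂ : Fin n,
      G i₁ (Sum.inl j₁) * G i₂ (Sum.inr j₂) = G i₁ (Sum.inr j₂) * G i₂ (Sum.inl j₁) := by
    intro i₁ i₂ j₁ j₂
    rcases lt_trichotomy i₁ i₂ with h | h | h
    · have := hminor i₁ i₂ h j₁ j₂; linarith
    · subst h; ring
    · have := hminor i₂ i₁ h j₁ j₂; linarith
  by_cases hA : ∀ i j, G i (Sum.inl j) = 0
  · exact Or.inr (Or.inl hA)
  by_cases hB : ∀ i j, G i (Sum.inr j) = 0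
  · exact Or.inr (Or.inr hB)
  push_neg at hA hB
  obtain ⟨a, p, hap⟩ := hA
  obtain ⟨b, q, hbq⟩ := hB
  left
  set u : Fin n → ℝ := fun i => G i (Sum.inr q) with hu
  set v : Fin n ⊕ Fin n → ℝ :=
    Sum.elim (fun j => G b (Sum.inl j) / G b (Sum.inr q))
      (fun j => G a (Sum.inr j) * G b (Sum.inl p) /
        (G a (Sum.inl p) * G b (Sum.inr q))) with hv
  have hG : G = Matrix.vecMulVec u v := by
    ext i c
    cases c with
    | inl j =>
      have h1 := hrel i b j q
      simp only [Matrix.vecMulVec_apply, hu, hv, Sum.elim_inl]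
      field_simp
      linarith
    | inr j =>
      simp only [Matrix.vecMulVec_apply, hu, hv, Sum.elim_inr]
      have h1 := hrel a i p j
      have h2 := hrel i b p q
      field_simp
      linear_combination G b (Sum.inr q) * h1 + G a (Sum.inr j) * h2
  rw [hG, Matrix.vecMulVec_eq Unit]
  refine (Matrix.rank_mul_le_left _ _).trans ?_
  simpa using Matrix.rank_le_card_width (Matrix.replicateCol Unit u)
end

section
/- Let n ≥ 2 and let F ∈ ℝ^{2n×2n} have block form [[A,B],[C,D]] with n×n blocks. Assume det F ≠ 0, and assume that both (A | B) and (C | D) satisfy: every 2×2 minor with both rows from the same block row, one column index ≤ n and one column index > n, vanishes. Then F is split, i.e., B = 0 and C = 0, or A = 0 and D = 0. -/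
/-!
If `A` and `B` both have a nonzero entry, the vanishing mixed minors make every column of `B` a
multiple of a fixed nonzero column of `A`, and then every column of `A` a multiple of a fixed
column of `B`. So `(A | B)` has rank at most `1 < n`, although its rows are rows of the invertible
matrix `F`. Hence `A = 0` or `B = 0`, and likewise `C = 0` or `D = 0`; the two mixed cases give a
block-triangular `F` with a zero diagonal block, contradicting `det F ≠ 0`.
-/

open Matrix Module Submodule

variable {K m n n₁ n₂ : Type*}

/-- The minor of `(A | B)` on rows `i, i'` and on column `j` of `A` and column `j'` of `B`
vanishes, for all rows and not only `i < i'`. -/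
def MixedMinorsVanish [Mul K] (A : Matrix m n₁ K) (B : Matrix m n₂ K) : Prop :=
  ∀ i i' j j', A i j * B i' j' = A i' j * B i j'

theorem MixedMinorsVanish.of_lt [CommRing K] [LinearOrder m] {A : Matrix m n₁ K}
    {B : Matrix m n₂ K}
    (h : ∀ i₁ i₂ : m, i₁ < i₂ → ∀ j₁ j₂, A i₁ j₁ * B i₂ j₂ - B i₁ j₂ * A i₂ j₁ = 0) :
    MixedMinorsVanish A B := by
  intro i i' j j'
  rcases lt_trichotomy i i' with hlt | rfl | hgt
  · linear_combination h i i' hlt j j'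
  · ring
  · linear_combination -h i' i hgt j j'

theorem MixedMinorsVanish.rank_fromCols_le_one [Field K] [Fintype m] [Fintype n₁]
    [Fintype n₂] {A : Matrix m n₁ K} {B : Matrix m n₂ K} (h : MixedMinorsVanish A B)
    (hA : A ≠ 0) (hB : B ≠ 0) : (fromCols A B).rank ≤ 1 := by
  obtain ⟨p, q, hpq⟩ : ∃ p q, A p q ≠ 0 := by
    by_contra! h0; exact hA (ext h0)
  obtain ⟨r, l, hrl⟩ : ∃ r l, B r l ≠ 0 := by
    by_contra! h0; exact hB (ext h0)
  have hB_col : ∀ j, B.col j = (B p j / A p q) • A.col q := by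
    intro j; ext i
    simp only [col_apply, Pi.smul_apply, smul_eq_mul]
    field_simp
    linear_combination h p i q j
  have hA_col : ∀ j, A.col j = (A r j / B r l) • B.col l := by
    intro j; ext i
    simp only [col_apply, Pi.smul_apply, smul_eq_mul]
    field_simp
    linear_combination h i r j l
  have hcols : Set.range (fromCols A B).col ⊆ span K {A.col q} := by
    rintro _ ⟨j | j, rfl⟩
    · change A.col j ∈ _
      rw [hA_col j, hB_col l, smul_smul]
      exact (span K {A.col q}).smul_mem _ (mem_span_singleton_self _)
    · change B.col j ∈ _
      rw [hB_col j]
      exact (span K {A.col q}).smul_mem _ (mem_span_singleton_self _)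
  rw [rank_eq_finrank_span_cols]
  calc finrank K (span K (Set.range (fromCols A B).col))
      ≤ finrank K (span K {A.col q}) := finrank_mono (span_le.mpr hcols)
    _ ≤ 1 := by simpa using finrank_span_le_card ({A.col q} : Set (m → K))

theorem rank_fromCols_of_det_fromBlocks_ne_zero [Field K] [Fintype n] [DecidableEq n]
    {A B C D : Matrix n n K} (h : (fromBlocks A B C D).det ≠ 0) :
    (fromCols A B).rank = Fintype.card n ∧ (fromCols C D).rank = Fintype.card n :=
  ⟨((linearIndependent_rows_of_det_ne_zero h).comp _ Sum.inl_injective).rank_matrix,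
    ((linearIndependent_rows_of_det_ne_zero h).comp _ Sum.inr_injective).rank_matrix⟩

theorem MixedMinorsVanish.eq_zero_or_eq_zero [Field K] [Fintype m] [Fintype n₁] [Fintype n₂]
    {A : Matrix m n₁ K} {B : Matrix m n₂ K} (h : MixedMinorsVanish A B)
    (hrank : 1 < (fromCols A B).rank) : A = 0 ∨ B = 0 := by
  by_contra! hAB
  exact (h.rank_fromCols_le_one hAB.1 hAB.2).not_gt hrank

/-- Let n ≥ 2 and F = [[A,B],[C,D]] with det F ≠ 0. If all mixed 2×2 minors of
(A|B) and of (C|D) vanish, then F is split: B = C = 0 or A = D = 0. -/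
theorem stmt5 (n : ℕ) (hn : 2 ≤ n) (A B C D : Matrix (Fin n) (Fin n) ℝ)
    (hdet : (Matrix.fromBlocks A B C D).det ≠ 0)
    (hAB : ∀ i₁ i₂ : Fin n, i₁ < i₂ → ∀ j₁ j₂ : Fin n,
      A i₁ j₁ * B i₂ j₂ - B i₁ j₂ * A i₂ j₁ = 0)
    (hCD : ∀ i₁ i₂ : Fin n, i₁ < i₂ → ∀ j₁ j₂ : Fin n,
      C i₁ j₁ * D i₂ j₂ - D i₁ j₂ * C i₂ j₁ = 0) :
    (B = 0 ∧ C = 0) ∨ (A = 0 ∧ D = 0) := by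
  have : Nonempty (Fin n) := ⟨⟨0, by omega⟩⟩
  have hcard : 1 < Fintype.card (Fin n) := by rw [Fintype.card_fin]; omega
  obtain ⟨htop, hbot⟩ := rank_fromCols_of_det_fromBlocks_ne_zero hdet
  rcases (MixedMinorsVanish.of_lt hAB).eq_zero_or_eq_zero (htop ▸ hcard) with rfl | rfl <;>
    rcases (MixedMinorsVanish.of_lt hCD).eq_zero_or_eq_zero (hbot ▸ hcard) with rfl | rfl
  · simp [det_fromBlocks_zero₂₁] at hdet
  · exact .inr ⟨rfl, rfl⟩
  · exact .inl ⟨rfl, rfl⟩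
  · simp [det_fromBlocks_zero₁₂] at hdet
end

section
/- Let c > 1, X₁ = [[c,0],[0,1/c]], X₂ = [[1/c,0],[0,c]], X₃ = [[0,−c],[1/c,0]], X₄ = [[0,−1/c],[c,0]]. Then det(X₁ − X₂) = det(X₃ − X₄) = −(c − 1/c)², and det(X_i − X_j) = 2 whenever i ∈ {1,2} and j ∈ {3,4}. In particular all pairwise differences X_i − X_j (i ≠ j) have nonzero determinant, so no pair is rank-one connected. -/
/-- Determinants of pairwise differences of the four matrices X₁,…,X₄:
det(X₁−X₂) = det(X₃−X₄) = −(c−1/c)², det(X_i−X_j) = 2 for i ∈ {1,2}, j ∈ {3,4};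
in particular no pair is rank-one connected. -/
theorem stmt10 (c : ℝ) (hc : 1 < c) (X : Fin 4 → Matrix (Fin 2) (Fin 2) ℝ)
    (hX : X = ![!![c, 0; 0, 1 / c], !![1 / c, 0; 0, c],
      !![0, -c; 1 / c, 0], !![0, -(1 / c); c, 0]]) :
    (X 0 - X 1).det = -(c - 1 / c) ^ 2 ∧
    (X 2 - X 3).det = -(c - 1 / c) ^ 2 ∧
    (∀ i j : Fin 4, i ∈ ({0, 1} : Set (Fin 4)) → j ∈ ({2, 3} : Set (Fin 4)) →
      (X i - X j).det = 2) ∧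
    (∀ i j : Fin 4, i ≠ j → (X i - X j).det ≠ 0) := by
  subst hX
  have hc0 : c ≠ 0 := by positivity
  have hne : c - 1 / c ≠ 0 := by
    have h1 : 1 / c < 1 := by
      rw [div_lt_one (by positivity)]; exact hc
    nlinarith
  have hsq : -(c - 1 / c) ^ 2 ≠ 0 := by
    simpa using pow_ne_zero 2 hne
  refine ⟨?_, ?_, ?_, ?_⟩
  · simp [Matrix.det_fin_two, Matrix.sub_apply]; field_simp; ring
  · simp [Matrix.det_fin_two, Matrix.sub_apply]; field_simp; ring
  · intro i j hi hj
    fin_cases i <;> fin_cases j <;>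
      simp_all [Matrix.det_fin_two, Matrix.sub_apply] <;> norm_num
  · intro i j hij
    fin_cases i <;> fin_cases j <;>
      simp_all [Matrix.det_fin_two, Matrix.sub_apply] <;>
      (try constructor) <;> intro h <;>
      nlinarith [mul_pos (lt_trans one_pos hc) (lt_trans one_pos hc),
        mul_pos (inv_pos.mpr (lt_trans one_pos hc)) (inv_pos.mpr (lt_trans one_pos hc)),
        inv_lt_one_of_one_lt₀ hc, inv_pos.mpr (lt_trans one_pos hc)]
end

section
/- Let A^μ be the 4×4 matrix [[0, −a, 2, 2], [−aμ, 0, 2, 2], [2μ, 2μ, 0, −a], [2μ, 2μ, −aμ, 0]] with a > 0 and μ ≠ 0. Then A^μ has a nonzero kernel vector with all entries positive and μ > 1 if and only if a > 4; moreover when a > 4 and μ is the root (γ−2)/2 + (1/2)√((γ−2)²−4) of (1+μ)² = γμ with γ = a²/4, the vector λ = (1, μ, α, μα) with suitable α > 0 satisfies A^μ λ = 0. -/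
/-- The 4×4 matrix A^μ has a positive kernel vector for some μ > 1 iff a > 4;
and for a > 4 the particular root μ of (1+μ)² = γμ with γ = a²/4 admits a kernel
vector of the form (1, μ, α, μα) with α > 0. -/
theorem stmt11 (a : ℝ) (ha : 0 < a) (Amu : ℝ → Matrix (Fin 4) (Fin 4) ℝ)
    (hA : ∀ μ, Amu μ = !![0, -a, 2, 2;
                          -a * μ, 0, 2, 2;
                          2 * μ, 2 * μ, 0, -a;
                          2 * μ, 2 * μ, -a * μ, 0]) :
    ((∃ μ : ℝ, 1 < μ ∧ ∃ lam : Fin 4 → ℝ, (∀ i, 0 < lam i) ∧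
        (Amu μ).mulVec lam = 0) ↔ 4 < a) ∧
    (4 < a → ∀ γ μ : ℝ, γ = a ^ 2 / 4 →
      μ = (γ - 2) / 2 + Real.sqrt ((γ - 2) ^ 2 - 4) / 2 →
      1 < μ ∧ ∃ α : ℝ, 0 < α ∧ (Amu μ).mulVec ![1, μ, α, μ * α] = 0) := by
  have key : 4 < a → ∀ γ μ : ℝ, γ = a ^ 2 / 4 →
      μ = (γ - 2) / 2 + Real.sqrt ((γ - 2) ^ 2 - 4) / 2 →
      1 < μ ∧ ∃ α : ℝ, 0 < α ∧ (Amu μ).mulVec ![1, μ, α, μ * α] = 0 := by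
    intro ha4 γ μ hγ hμ
    have hγ4 : 4 < γ := by rw [hγ]; nlinarith
    have hs : 0 < (γ - 2) ^ 2 - 4 := by nlinarith
    have hsq : Real.sqrt ((γ - 2) ^ 2 - 4) ^ 2 = (γ - 2) ^ 2 - 4 :=
      Real.sq_sqrt hs.le
    have hspos : 0 < Real.sqrt ((γ - 2) ^ 2 - 4) := Real.sqrt_pos.mpr hs
    have hμ1 : 1 < μ := by rw [hμ]; nlinarith
    have hquad : a ^ 2 * μ = 4 * (1 + μ) ^ 2 := by
      have : (1 + μ) ^ 2 = γ * μ := by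
        rw [hμ]; linear_combination hsq / 4
      rw [hγ] at this; linarith
    have hμ0 : 0 < μ := by linarith
    refine ⟨hμ1, 2 * (1 + μ) / a, by positivity, ?_⟩
    rw [hA]
    funext i
    fin_cases i <;>
      · simp [Matrix.mulVec, dotProduct, Fin.sum_univ_four]
        field_simp
        nlinarith [hquad]
  constructor
  · constructor
    · rintro ⟨μ, hμ1, lam, hpos, hker⟩
      rw [hA] at hker
      have h0 := congrFun hker 0
      have h1 := congrFun hker 1
      have h2 := congrFun hker 2
      have h3 := congrFun hker 3
      simp [Matrix.mulVec, dotProduct, Fin.sum_univ_four] at h0 h1 h2 h3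
      have hμ0 : 0 < μ := by linarith
      have e1 : lam 1 = μ * lam 0 := by
        have h : a * lam 1 = a * (μ * lam 0) := by linarith
        exact mul_left_cancel₀ ha.ne' h
      have e3 : lam 3 = μ * lam 2 := by
        have h : a * lam 3 = a * (μ * lam 2) := by linarith
        exact mul_left_cancel₀ ha.ne' h
      -- row0: a μ lam0 = 2 (1+μ) lam2 ; row2: a μ lam2 = 2 μ (1+μ) lam0
      have eA : a * μ * lam 0 = 2 * (1 + μ) * lam 2 := by
        rw [e1] at h0; rw [e3] at h0; linarith
      have eB : a * μ * lam 2 = 2 * μ * (1 + μ) * lam 0 := by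
        rw [e1] at h2; rw [e3] at h2; linarith
      have hprod : (a * μ * lam 0) * (a * μ * lam 2)
          = (2 * (1 + μ) * lam 2) * (2 * μ * (1 + μ) * lam 0) := by
        rw [eA, eB]
      have hkey : a ^ 2 * μ = 4 * (1 + μ) ^ 2 := by
        have hne : μ * lam 0 * lam 2 ≠ 0 := by
          have := hpos 0; have := hpos 2; positivity
        apply mul_right_cancel₀ hne
        ring_nf
        ring_nf at hprod
        linarith
      have ha16 : 16 < a ^ 2 := by nlinarith [sq_nonneg (μ - 1), hμ0]
      nlinarith [ha16]
    · intro ha4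
      set γ : ℝ := a ^ 2 / 4 with hγ
      set μ : ℝ := (γ - 2) / 2 + Real.sqrt ((γ - 2) ^ 2 - 4) / 2 with hμ
      obtain ⟨hμ1, α, hα, hker⟩ := key ha4 γ μ rfl rfl
      refine ⟨μ, hμ1, ![1, μ, α, μ * α], ?_, hker⟩
      intro i
      have hμ0 : 0 < μ := by linarith
      fin_cases i <;> simp <;> positivity
  · exact key
end

section
/- Let p(μ) = det A^μ where A^μ is the 5×5 matrix as above (entries A_{ij} above the diagonal, μ·A_{ij} below, zero diagonal). Then p is a polynomial in μ of degree at most 4, p(0) = 0, p(−1) = 0, and lim_{μ→0} p(μ)/μ = A₁₂·A₂₃·A₃₄·A₄₅·A₅₁. -/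
/-!
Write `A^μ = U + μ • L` with `U`, `L` the strictly upper and lower triangular parts of `A`.
Then `det (U + X • L)` is a polynomial of degree at most 5 whose `X⁵`-coefficient is
`det L = 0`, and `p 0 = det U = 0`. For symmetric `A`, `A^{-1} = U - L` is skew-symmetric of odd
size, so its determinant vanishes. Finally, the first column of `A^μ` is divisible by `μ`; pulling
`μ` out leaves a matrix depending continuously on `μ`. At `μ = 0` it becomes upper triangular once
its columns are rotated cyclically, so its determinant is the product `A₀₁A₁₂A₂₃A₃₄A₄₀` along
the diagonal times the sign of the rotation, an even 5-cycle.
-/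

open Polynomial Filter Topology

namespace Matrix

section StrictTriangular

variable {n R : Type*} [LinearOrder n] [CommRing R]

def strictUpper (A : Matrix n n R) : Matrix n n R := of fun i j => if i < j then A i j else 0

def strictLower (A : Matrix n n R) : Matrix n n R := of fun i j => if j < i then A i j else 0

lemma strictUpper_add_smul_strictLower_apply (A : Matrix n n R) (μ : R) (i j : n) :
    (strictUpper A + μ • strictLower A) i j =
      if i < j then A i j else if i = j then 0 else μ * A i j := by
  rcases lt_trichotomy i j with h | rfl | h
  · simp [strictUpper, strictLower, h, h.not_gt]
  · simp [strictUpper, strictLower]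
  · simp [strictUpper, strictLower, h, h.not_gt, h.ne']

lemma strictUpper_transpose_of_isSymm {A : Matrix n n R} (hA : A.IsSymm) :
    (strictUpper A)ᵀ = strictLower A := by
  ext i j
  simp only [strictUpper, strictLower, transpose_apply, of_apply, hA.apply]

lemma strictUpper_isUpperTriangular (A : Matrix n n R) : (strictUpper A).IsUpperTriangular :=
  fun _ _ hji => if_neg (lt_asymm hji)

lemma strictLower_isLowerTriangular (A : Matrix n n R) : (strictLower A).IsLowerTriangular :=
  fun _ _ hij => if_neg (lt_asymm hij)

variable [Fintype n] [DecidableEq n] [Nonempty n]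

lemma det_strictUpper (A : Matrix n n R) : (strictUpper A).det = 0 := by
  rw [det_of_isUpperTriangular (strictUpper_isUpperTriangular A)]
  exact Finset.prod_eq_zero (Finset.mem_univ (Classical.arbitrary n)) (if_neg (lt_irrefl _))

lemma det_strictLower (A : Matrix n n R) : (strictLower A).det = 0 := by
  rw [det_of_isLowerTriangular _ (strictLower_isLowerTriangular A)]
  exact Finset.prod_eq_zero (Finset.mem_univ (Classical.arbitrary n)) (if_neg (lt_irrefl _))

end StrictTriangular

section Pencil

variable {n R : Type*} [Fintype n] [DecidableEq n] [CommRing R]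

lemma det_eq_zero_of_transpose_eq_neg [IsAddTorsionFree R] (hn : Odd (Fintype.card n))
    {M : Matrix n n R} (hM : Mᵀ = -M) : M.det = 0 := by
  have h := congrArg det hM
  rw [det_transpose, det_neg, hn.neg_one_pow, neg_one_mul] at h
  exact self_eq_neg.mp h

lemma eval_det_X_smul_add (U L : Matrix n n R) (μ : R) :
    (det ((X : R[X]) • L.map C + U.map C)).eval μ = det (U + μ • L) := by
  rw [← coe_evalRingHom, RingHom.map_det]
  congr 1
  ext i j
  simp only [RingHom.mapMatrix_apply, map_apply, add_apply, smul_apply, map_add, smul_eq_mul,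
    coe_evalRingHom, eval_mul, eval_X, eval_C]
  ring

lemma exists_polynomial_det_add_smul (U L : Matrix n n R) (hL : L.det = 0) :
    ∃ q : R[X], q.natDegree ≤ Fintype.card n - 1 ∧ ∀ μ, q.eval μ = det (U + μ • L) :=
  ⟨_, natDegree_le_pred (natDegree_det_X_add_C_le L U) (by rwa [coeff_det_X_add_C_card]),
    eval_det_X_smul_add U L⟩

lemma det_eq_mul_det_updateCol {M : Matrix n n R} {j : n} {μ : R} {c : n → R}
    (hM : ∀ i, M i j = μ * c i) : M.det = μ * (M.updateCol j c).det := by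
  rw [← det_updateCol_smul]
  congr
  ext i k
  by_cases hk : k = j
  · subst hk; simp [hM]
  · simp [hk]

end Pencil

section Limit

variable {n R : Type*} [Fintype n] [DecidableEq n] [LinearOrder n] [OrderBot n]
  [Field R] [TopologicalSpace R] [IsTopologicalRing R]

lemma tendsto_det_strictUpper_add_smul_strictLower_div (A : Matrix n n R) :
    Tendsto (fun μ => det (strictUpper A + μ • strictLower A) / μ) (𝓝[≠] 0)
      (𝓝 (det (updateCol (strictUpper A) ⊥ fun i => strictLower A i ⊥))) := by
  set c : n → R := fun i => strictLower A i ⊥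
  have hcont : Continuous fun μ : R => det (updateCol (strictUpper A + μ • strictLower A) ⊥ c) :=
    ((continuous_const.add (continuous_id.smul continuous_const)).matrix_updateCol ⊥
      continuous_const).matrix_det
  have hlim := (hcont.tendsto 0).mono_left (nhdsWithin_le_nhds (s := {0}ᶜ))
  rw [zero_smul, add_zero] at hlim
  refine hlim.congr' ?_
  filter_upwards [self_mem_nhdsWithin] with μ (hμ : μ ≠ 0)
  have hcol : ∀ i, (strictUpper A + μ • strictLower A) i ⊥ = μ * c i := fun i => by
    simp [c, strictUpper, strictLower]
  rw [det_eq_mul_det_updateCol hcol, mul_div_cancel_left₀ _ hμ]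

end Limit

lemma det_updateCol_strictUpper_zero {R : Type*} [CommRing R] {n : ℕ}
    (A : Matrix (Fin (n + 2)) (Fin (n + 2)) R) :
    (updateCol (strictUpper A) 0 fun i => strictLower A i 0).det =
      (-1) ^ (n + 1) * ∏ i, A i (i + 1) := by
  set B := updateCol (strictUpper A) 0 fun i => strictLower A i 0
  have hsucc : ∀ j : Fin (n + 2), j ≠ Fin.last _ → ((j + 1 : Fin (n + 2)) : ℕ) = j + 1 :=
    fun j hj => Fin.val_add_one_of_lt (lt_of_le_of_ne (Fin.le_last j) hj)
  have hsucc_ne : ∀ j : Fin (n + 2), j ≠ Fin.last _ → j + 1 ≠ 0 := fun j hj h => by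
    have := hsucc j hj
    rw [h, Fin.val_zero] at this
    omega
  have htri : (B.submatrix id (finRotate (n + 2))).IsUpperTriangular := by
    intro i j (hji : j < i)
    have hj : j ≠ Fin.last _ := (hji.trans_le (Fin.le_last i)).ne
    simp only [submatrix_apply, id_eq, finRotate_apply, B, updateCol_ne (hsucc_ne j hj),
      strictUpper, of_apply]
    refine if_neg fun hlt => ?_
    rw [Fin.lt_def, hsucc j hj] at hlt
    rw [Fin.lt_def] at hji
    omega
  have hdiag : ∀ i, B i (i + 1) = A i (i + 1) := by
    intro i
    by_cases hi : i = Fin.last _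
    · subst hi
      simp only [B, Fin.last_add_one, updateCol_self, strictLower, of_apply, if_pos Fin.last_pos]
    · simp only [B, updateCol_ne (hsucc_ne i hi), strictUpper, of_apply]
      rw [if_pos (Fin.lt_def.2 (by rw [hsucc i hi]; omega))]
  have h := det_permute' (finRotate (n + 2)) B
  simp only [det_of_isUpperTriangular htri, submatrix_apply, id_eq, finRotate_apply, hdiag,
    sign_finRotate] at h
  push_cast at h
  rw [h, ← mul_assoc, ← pow_add, Even.neg_one_pow ⟨n + 1, rfl⟩, one_mul]

end Matrix

open Matrix in
/-- p(μ) = det A^μ is a polynomial of degree ≤ 4 in μ with p(0) = 0, p(−1) = 0,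
and lim_{μ→0} p(μ)/μ = A₁₂A₂₃A₃₄A₄₅A₅₁. -/
theorem stmt13 (A : Fin 5 → Fin 5 → ℝ) (hsym : ∀ i j, A j i = A i j)
    (Amu : ℝ → Matrix (Fin 5) (Fin 5) ℝ)
    (hA : ∀ μ i j, Amu μ i j =
      if i < j then A i j else if i = j then 0 else μ * A i j)
    (p : ℝ → ℝ) (hp : ∀ μ, p μ = (Amu μ).det) :
    (∃ q : Polynomial ℝ, q.degree ≤ 4 ∧ ∀ μ, p μ = q.eval μ) ∧
    p 0 = 0 ∧ p (-1) = 0 ∧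
    Filter.Tendsto (fun μ => p μ / μ) (nhdsWithin 0 {(0 : ℝ)}ᶜ)
      (nhds (A 0 1 * A 1 2 * A 2 3 * A 3 4 * A 4 0)) := by
  have hpA : ∀ μ, p μ = det (strictUpper A + μ • strictLower A) := fun μ => by
    rw [hp]
    congr 1
    ext i j
    rw [hA]
    exact (strictUpper_add_smul_strictLower_apply A μ i j).symm
  obtain ⟨q, hq, hqeval⟩ := exists_polynomial_det_add_smul (strictUpper A) (strictLower A)
    (det_strictLower A)
  refine ⟨⟨q, by simpa using degree_le_of_natDegree_le hq, fun μ => by rw [hpA, hqeval]⟩,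
    ?_, ?_, ?_⟩
  · rw [hpA, zero_smul, add_zero]
    exact det_strictUpper A
  · rw [hpA]
    refine det_eq_zero_of_transpose_eq_neg (by decide) ?_
    have hU := strictUpper_transpose_of_isSymm (IsSymm.ext hsym)
    have hL : (strictLower A)ᵀ = strictUpper A := by rw [← hU, transpose_transpose]
    rw [transpose_add, transpose_smul, hU, hL]
    module
  · simp_rw [hpA]
    convert tendsto_det_strictUpper_add_smul_strictLower_div A using 2
    refine ((det_updateCol_strictUpper_zero A).trans ?_).symm
    rw [Fin.prod_univ_five]
    simp only [Fin.reduceAdd]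
    ring
end

section
/- Let A be the 5×5 real matrix [[0,−a,2,2,−b],[−a,0,2,2,−b],[2,2,0,−a,2],[2,2,−a,0,2],[−b,−b,2,2,0]] with a, b > 0 and a > 4b. Then det A = 2a²(ab² + 4a − 16b) > 0. -/
theorem det_five_by_five_eq (a b : ℝ) :
    (!![0, -a, 2, 2, -b;
        -a, 0, 2, 2, -b;
        2, 2, 0, -a, 2;
        2, 2, -a, 0, 2;
        -b, -b, 2, 2, 0] : Matrix (Fin 5) (Fin 5) ℝ).det =
      2 * a ^ 2 * (a * b ^ 2 + 4 * a - 16 * b) := by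
  simp [Matrix.det_succ_row_zero, Fin.sum_univ_succ]
  simp +decide [Fin.succAbove]
  ring

-- `a (b² + 4) - 16 b > 4 b (b² + 4) - 16 b = 4 b³`.
theorem mul_sq_add_four_mul_sub_sixteen_mul_pos {a b : ℝ} (hb : 0 < b) (hab : 4 * b < a) :
    0 < a * b ^ 2 + 4 * a - 16 * b :=
  calc 0 < 4 * b ^ 3 := by positivity
    _ = 4 * b * (b ^ 2 + 4) - 16 * b := by ring
    _ < a * (b ^ 2 + 4) - 16 * b := by gcongr
    _ = a * b ^ 2 + 4 * a - 16 * b := by ring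

theorem stmt16_general (a b : ℝ) (hb : 0 < b) (hab : 4 * b < a) :
    (!![0, -a, 2, 2, -b;
        -a, 0, 2, 2, -b;
        2, 2, 0, -a, 2;
        2, 2, -a, 0, 2;
        -b, -b, 2, 2, 0] : Matrix (Fin 5) (Fin 5) ℝ).det =
      2 * a ^ 2 * (a * b ^ 2 + 4 * a - 16 * b) ∧
    0 < (!![0, -a, 2, 2, -b;
        -a, 0, 2, 2, -b;
        2, 2, 0, -a, 2;
        2, 2, -a, 0, 2;
        -b, -b, 2, 2, 0] : Matrix (Fin 5) (Fin 5) ℝ).det := by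
  have ha : 0 < a := by linarith
  have hfactor := mul_sq_add_four_mul_sub_sixteen_mul_pos hb hab
  rw [det_five_by_five_eq]
  exact ⟨rfl, by positivity⟩

/-- The determinant of the explicit 5×5 matrix A equals 2a²(ab² + 4a − 16b),
which is positive when a, b > 0 and a > 4b. -/
theorem stmt16 (a b : ℝ) (ha : 0 < a) (hb : 0 < b) (hab : 4 * b < a) :
    (!![0, -a, 2, 2, -b;
        -a, 0, 2, 2, -b;
        2, 2, 0, -a, 2;
        2, 2, -a, 0, 2;
        -b, -b, 2, 2, 0] : Matrix (Fin 5) (Fin 5) ℝ).det =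
      2 * a ^ 2 * (a * b ^ 2 + 4 * a - 16 * b) ∧
    0 < (!![0, -a, 2, 2, -b;
        -a, 0, 2, 2, -b;
        2, 2, 0, -a, 2;
        2, 2, -a, 0, 2;
        -b, -b, 2, 2, 0] : Matrix (Fin 5) (Fin 5) ℝ).det :=
  stmt16_general a b hb hab
end
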